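/- arXiv:2210.00195 — 2 statements merged into one kernel-verified Lean document; each statement's English description precedes it below -/
import Mathlib

section
/- Let 0 → E → L̂ → L → 0 be an extension of differential graded Lie algebras with abelian kernel E (a dg module over L), and let s: L → L̂ be a linear section of degree 0. Define Δ₁(x) = d_{L̂}(s x) − s(d_L x) and Δ₂(x,y) = [s x, s y]_{L̂} − s[x,y]_L. If φ ∈ L¹ is a Maurer–Cartan element of L (i.e. dφ + ½[φ,φ] = 0) and α ∈ E¹, then s(φ) + α is a Maurer–Cartan element of L̂ if and only if −(d + φ·)α = Δ₁(φ) + ½Δ₂(φ,φ), where φ· denotes the action of φ on E. -/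
/-- Lifting Maurer–Cartan elements along an abelian extension
`0 → E → L̂ → L → 0` of differential graded Lie algebras (here described by the
degree-1 and degree-2 components, which is all the Maurer–Cartan equation involves):
for a linear section `s` with defects `Δ₁(x) = d(s x) − s(d x)` and
`Δ₂(x, y) = [s x, s y] − s [x, y]`, a class `α ∈ E¹` makes `s(φ) + α` a Maurer–Cartan
element of `L̂` for a given Maurer–Cartan element `φ ∈ L¹` if and only if
`−(d + φ·)α = Δ₁(φ) + ½ Δ₂(φ, φ)`. -/
theorem stmt_0 {k L1 L2 E1 E2 H1 H2 : Type*} [Field k] [CharZero k]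
    [AddCommGroup L1] [Module k L1] [AddCommGroup L2] [Module k L2]
    [AddCommGroup E1] [Module k E1] [AddCommGroup E2] [Module k E2]
    [AddCommGroup H1] [Module k H1] [AddCommGroup H2] [Module k H2]
    -- differentials of L, L̂, E in the relevant degree
    (dL : L1 →ₗ[k] L2) (dH : H1 →ₗ[k] H2) (dE : E1 →ₗ[k] E2)
    -- brackets of degree-one elements (symmetric on odd degrees)
    (brL : L1 →ₗ[k] L1 →ₗ[k] L2) (brH : H1 →ₗ[k] H1 →ₗ[k] H2)
    -- the extension maps and the linear section
    (i1 : E1 →ₗ[k] H1) (i2 : E2 →ₗ[k] H2)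
    (p1 : H1 →ₗ[k] L1) (p2 : H2 →ₗ[k] L2)
    (s1 : L1 →ₗ[k] H1) (s2 : L2 →ₗ[k] H2)
    -- the action of L on the dg module E
    (act : L1 →ₗ[k] E1 →ₗ[k] E2)
    (hi2 : Function.Injective i2)
    (hbrsymm : ∀ x y : H1, brH x y = brH y x)
    (habelian : ∀ a b : E1, brH (i1 a) (i1 b) = 0)
    (haction : ∀ (x : H1) (a : E1), brH x (i1 a) = i2 (act (p1 x) a))
    (hdi : ∀ a : E1, dH (i1 a) = i2 (dE a))
    (hp1s : ∀ x : L1, p1 (s1 x) = x)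
    (hp1i : ∀ a : E1, p1 (i1 a) = 0)
    (hp2s : ∀ x : L2, p2 (s2 x) = x)
    -- the defects Δ₁ and Δ₂ of the section, valued in E
    (D1 : L1 → E2) (hD1 : ∀ x : L1, i2 (D1 x) = dH (s1 x) - s2 (dL x))
    (D2 : L1 → L1 → E2)
    (hD2 : ∀ x y : L1, i2 (D2 x y) = brH (s1 x) (s1 y) - s2 (brL x y))
    -- a Maurer–Cartan element φ of L and a lift candidate α ∈ E¹
    (φ : L1) (hφ : dL φ + (1 / 2 : k) • brL φ φ = 0) (α : E1) :
    (dH (s1 φ + i1 α) + (1 / 2 : k) • brH (s1 φ + i1 α) (s1 φ + i1 α) = 0) ↔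
      (-(dE α + act φ α) = D1 φ + (1 / 2 : k) • D2 φ φ) := by
  have key : dH (s1 φ + i1 α) + (1 / 2 : k) • brH (s1 φ + i1 α) (s1 φ + i1 α)
      = i2 (dE α + act φ α + (D1 φ + (1 / 2 : k) • D2 φ φ)) := by
    have hsym : brH (i1 α) (s1 φ) = i2 (act φ α) := by
      rw [hbrsymm, haction, hp1s]
    have h2 : brH (s1 φ) (i1 α) = i2 (act φ α) := by rw [haction, hp1s]
    have hs2 : s2 (dL φ) + (1 / 2 : k) • s2 (brL φ φ) = 0 := by
      rw [← map_smul, ← map_add, hφ, map_zero]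
    have hdHs : dH (s1 φ) = i2 (D1 φ) + s2 (dL φ) := by
      rw [hD1]; abel
    have hbrs : brH (s1 φ) (s1 φ) = i2 (D2 φ φ) + s2 (brL φ φ) := by
      rw [hD2]; abel
    simp only [map_add, LinearMap.add_apply, LinearMap.map_add, hdHs, hdi,
      hbrs, h2, hsym, habelian, smul_add, map_smul]
    linear_combination (norm := module) hs2
  rw [key]
  constructor
  · intro h
    have := hi2 (by rw [h, map_zero] : i2 (dE α + act φ α + (D1 φ + (1 / 2 : k) • D2 φ φ)) = i2 0)
    linear_combination (norm := abel) -this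
  · intro h
    have : dE α + act φ α + (D1 φ + (1 / 2 : k) • D2 φ φ) = 0 := by
      linear_combination (norm := abel) -h
    rw [this, map_zero]
end

section
/- Let R be a commutative ring, I an ideal, k ≥ 0, and suppose E^{(k+1)} is an R/I^{k+2}-module such that E^{(k)} := E^{(k+1)}/I^{k+1}E^{(k+1)} and E := E^{(k+1)}/IE^{(k+1)}. Then there is a short exact sequence of R/I^{k+2}-modules 0 → (I^{k+1}/I^{k+2}) ⊗_{R/I} E → E^{(k+1)} → E^{(k)} → 0, provided E^{(k+1)} is flat over R/I^{k+2} (or I^{k+1}E^{(k+1)} is annihilated by I so that the multiplication map (I^{k+1}/I^{k+2}) ⊗_{R/I} E → I^{k+1}E^{(k+1)} is an isomorphism). -/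
open TensorProduct

set_option maxHeartbeats 4000000 in
set_option synthInstance.maxHeartbeats 400000 in
private lemma stmt16_aux_inj {R M : Type*} [CommRing R] [AddCommGroup M] [Module R M]
    (I : Ideal R) (k : ℕ)
    (htor : Module.IsTorsionBySet R M ((I ^ (k + 2) : Ideal R) : Set R))
    (hflat : letI := htor.module; Module.Flat (R ⧸ I ^ (k + 2)) M)
    (F : (TensorProduct (R ⧸ I)
        (↥(I ^ (k + 1)) ⧸ (I • (⊤ : Submodule R ↥(I ^ (k + 1)))))
        (M ⧸ (I • (⊤ : Submodule R M)))) →+ M)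
    (hf : ∀ (x : ↥(I ^ (k + 1))) (m : M),
      F (Submodule.Quotient.mk x ⊗ₜ Submodule.Quotient.mk m) = (x : R) • m) :
    Function.Injective F := by
  letI instA : Module (R ⧸ I ^ (k + 2)) M := htor.module
  have hmulmem : ∀ (x : R), x ∈ I ^ (k + 1) → ∀ r ∈ I, x * r ∈ I ^ (k + 2) := by
    intro x hx r hr
    rw [pow_succ I (k + 1)]
    exact Ideal.mul_mem_mul hx hr
  have hsm1 : ∀ (r : R) (x : ↥(I ^ (k + 1))),
      (Ideal.Quotient.mk I r) • (Submodule.Quotient.mk (p := I • (⊤ : Submodule R ↥(I ^ (k + 1)))) x)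
        = Submodule.Quotient.mk (r • x) := fun r x => Module.Quotient.mk_smul_mk (↥(I ^ (k + 1))) I r x
  have hsm2 : ∀ (r : R) (m : M),
      (Ideal.Quotient.mk I r) • (Submodule.Quotient.mk (p := I • (⊤ : Submodule R M)) m)
        = Submodule.Quotient.mk (r • m) := fun r m => Module.Quotient.mk_smul_mk M I r m
  letI A := R ⧸ I ^ (k + 2)
  let π₀ := Ideal.Quotient.mk (I ^ (k + 2))
  let J : Ideal (R ⧸ I ^ (k + 2)) := (I ^ (k + 1)).map π₀
  letI instWR : Module R (↥J ⊗[R ⧸ I ^ (k + 2)] M) := Module.compHom _ π₀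
  haveI instWC : SMulCommClass R R (↥J ⊗[R ⧸ I ^ (k + 2)] M) :=
    ⟨fun r s w => by
      show π₀ r • π₀ s • w = π₀ s • π₀ r • w
      rw [smul_comm]⟩
  have hAsmul : ∀ (r : R) (m : M), (π₀ r) • m = r • m := fun r m => rfl
  let p : ↥(I ^ (k + 1)) → ↥J := fun x => ⟨π₀ x.1, Ideal.mem_map_of_mem _ x.2⟩
  have hp_smul : ∀ (r : R) (x : ↥(I ^ (k + 1))), (π₀ r) • p x = p (r • x) := by
    intro r x
    refine Subtype.ext ?_
    show π₀ r • (π₀ x.1) = π₀ ((r • x : ↥(I ^ (k + 1))) : R)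
    rw [smul_eq_mul, Submodule.coe_smul, smul_eq_mul, map_mul]
  have hp_add : ∀ (x y : ↥(I ^ (k + 1))), p x + p y = p (x + y) := by
    intro x y
    exact Subtype.ext (by show π₀ x.1 + π₀ y.1 = π₀ ((x + y : ↥(I ^ (k + 1))) : R); simp)
  -- multiplication map on J ⊗ M, injective by flatness
  let mult : (↥J ⊗[R ⧸ I ^ (k + 2)] M) →ₗ[R ⧸ I ^ (k + 2)] M :=
    TensorProduct.lift ((LinearMap.lsmul (R ⧸ I ^ (k + 2)) M).comp J.subtype)
  have hmult : ∀ (j : ↥J) (m : M), mult (j ⊗ₜ m) = (j : R ⧸ I ^ (k + 2)) • m := by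
    intro j m; simp [mult]
  have hmultinj : Function.Injective mult := by
    have h1 := (Module.Flat.iff_rTensor_injective' (R := R ⧸ I ^ (k + 2)) (M := M)).mp hflat J
    have h2 : (TensorProduct.lid (R ⧸ I ^ (k + 2)) M).toLinearMap.comp
        (LinearMap.rTensor M J.subtype) = mult := LinearMap.lid_comp_rTensor M J.subtype
    rw [← h2]
    rw [LinearMap.coe_comp]
    exact (TensorProduct.lid (R ⧸ I ^ (k + 2)) M).injective.comp h1
  -- the map φ : T → J ⊗ M
  letI instLM : Module R (M →ₗ[R] ↥J ⊗[R ⧸ I ^ (k + 2)] M) := by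
    exact @LinearMap.module R R R M (↥J ⊗[R ⧸ I ^ (k + 2)] M) _ _ _ _ _ _ (RingHom.id R) _ _ instWC
  let g : ↥(I ^ (k + 1)) →ₗ[R] M →ₗ[R] (↥J ⊗[R ⧸ I ^ (k + 2)] M) :=
    { toFun := fun x =>
        { toFun := fun m => p x ⊗ₜ m
          map_add' := fun m n => TensorProduct.tmul_add _ m n
          map_smul' := by
            intro r m
            show p x ⊗ₜ[R ⧸ I ^ (k + 2)] (r • m) = (π₀ r) • (p x ⊗ₜ m)
            rw [← TensorProduct.tmul_smul (r := π₀ r), hAsmul] }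
      map_add' := by
        intro x y
        ext m
        show p (x + y) ⊗ₜ m = p x ⊗ₜ m + p y ⊗ₜ m
        rw [← TensorProduct.add_tmul, hp_add]
      map_smul' := by
        intro r x
        ext m
        show p (r • x) ⊗ₜ[R ⧸ I ^ (k + 2)] m = (π₀ r) • (p x ⊗ₜ m)
        rw [TensorProduct.smul_tmul', hp_smul] }
  have hgval : ∀ (x : ↥(I ^ (k + 1))) (m : M), g x m = p x ⊗ₜ m := fun _ _ => rfl
  have hgker : ∀ x : ↥(I ^ (k + 1)), (I • (⊤ : Submodule R M)) ≤ LinearMap.ker (g x) := by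
    intro x
    refine Submodule.smul_le.2 fun r hr m _ => ?_
    simp only [LinearMap.mem_ker]
    rw [hgval]
    have h3 : p x ⊗ₜ (r • m) = ((π₀ r) • p x) ⊗ₜ[R ⧸ I ^ (k + 2)] m := by
      rw [TensorProduct.smul_tmul, hAsmul]
    have hz : (π₀ r) • p x = 0 := by
      refine Subtype.ext ?_
      show π₀ r • (π₀ x.1) = (0 : R ⧸ I ^ (k + 2))
      rw [smul_eq_mul, ← map_mul]
      exact Ideal.Quotient.eq_zero_iff_mem.mpr (mul_comm r x.1 ▸ hmulmem _ x.2 r hr)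
    rw [h3, hz, TensorProduct.zero_tmul]
  letI instLM2 : Module R ((M ⧸ (I • (⊤ : Submodule R M))) →ₗ[R] (↥J ⊗[R ⧸ I ^ (k + 2)] M)) := by
    exact @LinearMap.module R R R _ (↥J ⊗[R ⧸ I ^ (k + 2)] M) _ _ _ _ _ _ (RingHom.id R) _ _ instWC
  let g2 : ↥(I ^ (k + 1)) →ₗ[R]
      ((M ⧸ (I • (⊤ : Submodule R M))) →ₗ[R] (↥J ⊗[R ⧸ I ^ (k + 2)] M)) :=
    { toFun := fun x => Submodule.liftQ _ (g x) (hgker x)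
      map_add' := by
        intro x y
        ext m
        simp only [LinearMap.comp_apply, Submodule.mkQ_apply, Submodule.liftQ_apply,
          LinearMap.add_comp, LinearMap.add_apply]
        rw [map_add g, LinearMap.add_apply]
      map_smul' := by
        intro r x
        ext m
        simp only [LinearMap.comp_apply, Submodule.mkQ_apply, Submodule.liftQ_apply,
          RingHom.id_apply, LinearMap.smul_comp, LinearMap.smul_apply]
        rw [map_smul g]; rfl }
  have hg2val : ∀ (x : ↥(I ^ (k + 1))) (m : M),
      g2 x (Submodule.Quotient.mk m) = p x ⊗ₜ m := by
    intro x m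
    simp only [g2, LinearMap.coe_mk, AddHom.coe_mk, Submodule.liftQ_apply]
    exact hgval x m
  have hg2ker : (I • (⊤ : Submodule R ↥(I ^ (k + 1)))) ≤ LinearMap.ker g2 := by
    refine Submodule.smul_le.2 fun r hr y _ => ?_
    simp only [LinearMap.mem_ker]
    ext m
    have h1 : Submodule.Quotient.mk (p := I • (⊤ : Submodule R M)) (r • m) = 0 := by
      rw [Submodule.Quotient.mk_eq_zero]
      exact Submodule.smul_mem_smul hr trivial
    have h2 : g2 (r • y) (Submodule.Quotient.mk m)
        = g2 y (Submodule.Quotient.mk (r • m)) := by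
      rw [hg2val, hg2val, ← hp_smul, TensorProduct.smul_tmul, hAsmul]
    simp only [LinearMap.comp_apply, Submodule.mkQ_apply, LinearMap.zero_comp,
      LinearMap.zero_apply]
    rw [h2, h1, map_zero]
  have hg2eq : ∀ x y : ↥(I ^ (k + 1)),
      (Submodule.Quotient.mk x : ↥(I ^ (k + 1)) ⧸ (I • (⊤ : Submodule R ↥(I ^ (k + 1)))))
        = Submodule.Quotient.mk y → g2 x = g2 y := by
    intro x y hxy
    rw [Submodule.Quotient.eq] at hxy
    have h0 := hg2ker hxy
    rw [LinearMap.mem_ker, map_sub, sub_eq_zero] at h0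
    exact h0
  let χ : (↥(I ^ (k + 1)) ⧸ (I • (⊤ : Submodule R ↥(I ^ (k + 1))))) → ↥(I ^ (k + 1)) :=
    fun q => Classical.choose (Submodule.Quotient.mk_surjective _ q)
  have hχ : ∀ q, Submodule.Quotient.mk (χ q) = q :=
    fun q => Classical.choose_spec (Submodule.Quotient.mk_surjective _ q)
  let Φ' : (↥(I ^ (k + 1)) ⧸ (I • (⊤ : Submodule R ↥(I ^ (k + 1))))) →+
      ((M ⧸ (I • (⊤ : Submodule R M))) →+ (↥J ⊗[R ⧸ I ^ (k + 2)] M)) :=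
    { toFun := fun q => (g2 (χ q)).toAddMonoidHom
      map_zero' := by
        have h3 : g2 (χ 0) = g2 0 :=
          hg2eq _ _ (by rw [hχ, Submodule.Quotient.mk_zero])
        ext m
        show g2 (χ 0) m = 0
        rw [h3, map_zero, LinearMap.zero_apply]
      map_add' := by
        intro a b
        have h3 : g2 (χ (a + b)) = g2 (χ a + χ b) :=
          hg2eq _ _ (by rw [hχ, Submodule.Quotient.mk_add, hχ, hχ])
        ext m
        show g2 (χ (a + b)) m = g2 (χ a) m + g2 (χ b) m
        rw [h3, map_add, LinearMap.add_apply] }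
  have hΦval : ∀ (x : ↥(I ^ (k + 1))) (m : M),
      Φ' (Submodule.Quotient.mk x) (Submodule.Quotient.mk m) = p x ⊗ₜ m := by
    intro x m
    show g2 (χ (Submodule.Quotient.mk x)) (Submodule.Quotient.mk m) = p x ⊗ₜ m
    rw [hg2eq (χ (Submodule.Quotient.mk x)) x (by rw [hχ])]
    exact hg2val x m
  have hΦcompat : ∀ (c : R ⧸ I)
      (a : ↥(I ^ (k + 1)) ⧸ (I • (⊤ : Submodule R ↥(I ^ (k + 1)))))
      (b : M ⧸ (I • (⊤ : Submodule R M))), Φ' (c • a) b = Φ' a (c • b) := by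
    intro c a b
    obtain ⟨r, rfl⟩ := Ideal.Quotient.mk_surjective c
    obtain ⟨x, rfl⟩ := Submodule.Quotient.mk_surjective _ a
    obtain ⟨m, rfl⟩ := Submodule.Quotient.mk_surjective _ b
    rw [hsm1, hsm2, hΦval, hΦval, ← hp_smul, TensorProduct.smul_tmul, hAsmul]
  let φ := TensorProduct.liftAddHom Φ' hΦcompat
  have hφval : ∀ (x : ↥(I ^ (k + 1))) (m : M),
      φ ((Submodule.Quotient.mk x) ⊗ₜ[R ⧸ I] (Submodule.Quotient.mk m)) = p x ⊗ₜ m := by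
    intro x m
    rw [TensorProduct.liftAddHom_tmul]
    exact hΦval x m
  have hφf : ∀ t, mult (φ t) = F t := by
    intro t
    induction t with
    | zero => rw [map_zero, map_zero, map_zero]
    | tmul a b =>
      obtain ⟨x, rfl⟩ := Submodule.Quotient.mk_surjective _ a
      obtain ⟨m, rfl⟩ := Submodule.Quotient.mk_surjective _ b
      rw [hφval, hmult, hf]
      exact hAsmul x.1 m
    | add s t hs ht => rw [map_add, map_add, hs, ht, map_add]
  -- the retraction ψ
  have hsurjJ : ∀ j : ↥J, ∃ x : ↥(I ^ (k + 1)), p x = j := by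
    intro j
    obtain ⟨x, hx, hxj⟩ :=
      (Ideal.mem_map_iff_of_surjective π₀ Ideal.Quotient.mk_surjective).1 j.2
    exact ⟨⟨x, hx⟩, Subtype.ext hxj⟩
  have hkerp : ∀ x y : ↥(I ^ (k + 1)), p x = p y →
      Submodule.Quotient.mk (p := I • (⊤ : Submodule R ↥(I ^ (k + 1)))) x
        = Submodule.Quotient.mk y := by
    intro x y hxy
    rw [Submodule.Quotient.eq]
    have hmem : (x : R) - (y : R) ∈ I ^ (k + 2) := by
      rw [← Ideal.Quotient.eq]
      exact congrArg Subtype.val hxy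
    rw [Submodule.mem_smul_top_iff]
    have : I • (I ^ (k + 1)) = I ^ (k + 2) := by
      rw [Ideal.smul_eq_mul, ← pow_succ']
    rw [this]
    exact hmem
  let ρ : ↥J → (↥(I ^ (k + 1)) ⧸ (I • (⊤ : Submodule R ↥(I ^ (k + 1))))) :=
    fun j => Submodule.Quotient.mk (Classical.choose (hsurjJ j))
  have hρ : ∀ x : ↥(I ^ (k + 1)), ρ (p x) = Submodule.Quotient.mk x :=
    fun x => hkerp _ x (Classical.choose_spec (hsurjJ (p x)))
  let tm : (↥(I ^ (k + 1)) ⧸ (I • (⊤ : Submodule R ↥(I ^ (k + 1))))) →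
      (M →+ (TensorProduct (R ⧸ I)
        (↥(I ^ (k + 1)) ⧸ (I • (⊤ : Submodule R ↥(I ^ (k + 1)))))
        (M ⧸ (I • (⊤ : Submodule R M))))) :=
    fun q =>
      { toFun := fun m => q ⊗ₜ (Submodule.Quotient.mk m)
        map_zero' := by
          show q ⊗ₜ (Submodule.Quotient.mk 0) = 0
          rw [Submodule.Quotient.mk_zero, TensorProduct.tmul_zero]
        map_add' := by
          intro m n
          show q ⊗ₜ (Submodule.Quotient.mk (m + n)) = _
          rw [Submodule.Quotient.mk_add, TensorProduct.tmul_add] }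
  let Ψ : ↥J →+ (M →+ (TensorProduct (R ⧸ I)
      (↥(I ^ (k + 1)) ⧸ (I • (⊤ : Submodule R ↥(I ^ (k + 1)))))
      (M ⧸ (I • (⊤ : Submodule R M))))) :=
    { toFun := fun j => tm (ρ j)
      map_zero' := by
        have h0 : p 0 = 0 := Subtype.ext (by show π₀ ((0 : ↥(I ^ (k + 1))) : R) = 0; simp)
        ext m
        show (ρ 0) ⊗ₜ (Submodule.Quotient.mk m) = 0
        rw [← h0, hρ, Submodule.Quotient.mk_zero, TensorProduct.zero_tmul]
      map_add' := by
        intro j j'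
        obtain ⟨x, rfl⟩ := hsurjJ j
        obtain ⟨y, rfl⟩ := hsurjJ j'
        ext m
        show (ρ (p x + p y)) ⊗ₜ (Submodule.Quotient.mk m)
          = (ρ (p x)) ⊗ₜ (Submodule.Quotient.mk m) + (ρ (p y)) ⊗ₜ (Submodule.Quotient.mk m)
        rw [hp_add, hρ, hρ, hρ, Submodule.Quotient.mk_add, TensorProduct.add_tmul] }
  have hΨcompat : ∀ (a : R ⧸ I ^ (k + 2)) (j : ↥J) (m : M), Ψ (a • j) m = Ψ j (a • m) := by
    intro a j m
    obtain ⟨r, rfl⟩ := Ideal.Quotient.mk_surjective a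
    obtain ⟨x, rfl⟩ := hsurjJ j
    show (ρ ((π₀ r) • p x)) ⊗ₜ (Submodule.Quotient.mk m)
      = (ρ (p x)) ⊗ₜ (Submodule.Quotient.mk ((π₀ r) • m))
    rw [hp_smul, hρ, hρ, hAsmul, ← hsm1, ← hsm2, TensorProduct.smul_tmul]
  let ψ := TensorProduct.liftAddHom Ψ hΨcompat
  have hψφ : ∀ t, ψ (φ t) = t := by
    intro t
    induction t with
    | zero => rw [map_zero, map_zero]
    | tmul a b =>
      obtain ⟨x, rfl⟩ := Submodule.Quotient.mk_surjective _ a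
      obtain ⟨m, rfl⟩ := Submodule.Quotient.mk_surjective _ b
      rw [hφval, TensorProduct.liftAddHom_tmul]
      show (ρ (p x)) ⊗ₜ (Submodule.Quotient.mk m) = _
      rw [hρ]
    | add s t hs ht => rw [map_add, map_add, hs, ht]
  intro t t' h
  have h1 : φ t = φ t' := hmultinj (by rw [hφf, hφf]; exact h)
  have h2 := congrArg ψ h1
  rwa [hψφ, hψφ] at h2

set_option maxHeartbeats 4000000 in
set_option synthInstance.maxHeartbeats 400000 in
/-- For `R` commutative, `I ⊆ R` an ideal, and a module `E^{(k+1)} = M`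
over `R/I^{k+2}` (i.e. an `R`-module killed by `I^{k+2}`) which is flat over
`R/I^{k+2}`, with `E := M/IM`, `E^{(k)} := M/I^{k+1}M`, there is a short exact sequence
of modules `0 → (I^{k+1}/I^{k+2}) ⊗_{R/I} E → M → E^{(k)} → 0`, where the first map is
induced by multiplication and `I^{k+1}/I^{k+2}` is realized as
`I^{k+1}/(I·I^{k+1})` (using `I^{k+2} M = 0`). -/
theorem stmt_16 {R M : Type*} [CommRing R] [AddCommGroup M] [Module R M]
    (I : Ideal R) (k : ℕ)
    (htor : Module.IsTorsionBySet R M ((I ^ (k + 2) : Ideal R) : Set R))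
    (hflat : letI := htor.module; Module.Flat (R ⧸ I ^ (k + 2)) M) :
    letI : Module R (TensorProduct (R ⧸ I)
        (↥(I ^ (k + 1)) ⧸ (I • (⊤ : Submodule R ↥(I ^ (k + 1)))))
        (M ⧸ (I • (⊤ : Submodule R M)))) :=
      Module.compHom _ (Ideal.Quotient.mk I)
    ∃ f : TensorProduct (R ⧸ I)
        (↥(I ^ (k + 1)) ⧸ (I • (⊤ : Submodule R ↥(I ^ (k + 1)))))
        (M ⧸ (I • (⊤ : Submodule R M))) →ₗ[R] M,
      (∀ (x : ↥(I ^ (k + 1))) (m : M),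
        f (Submodule.Quotient.mk x ⊗ₜ Submodule.Quotient.mk m) = (x : R) • m) ∧
      Function.Injective f ∧
      Function.Exact ⇑f ⇑(Submodule.mkQ ((I ^ (k + 1)) • (⊤ : Submodule R M))) ∧
      Function.Surjective ⇑(Submodule.mkQ ((I ^ (k + 1)) • (⊤ : Submodule R M))) := by
  letI instA : Module (R ⧸ I ^ (k + 2)) M := htor.module
  letI instT : Module R (TensorProduct (R ⧸ I)
      (↥(I ^ (k + 1)) ⧸ (I • (⊤ : Submodule R ↥(I ^ (k + 1)))))
      (M ⧸ (I • (⊤ : Submodule R M)))) := Module.compHom _ (Ideal.Quotient.mk I)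
  have hkill : ∀ (x : R), x ∈ I ^ (k + 2) → ∀ m : M, x • m = 0 := fun x hx m => @htor m ⟨x, hx⟩
  have hmulmem : ∀ (x : R), x ∈ I ^ (k + 1) → ∀ r ∈ I, x * r ∈ I ^ (k + 2) := by
    intro x hx r hr
    rw [pow_succ I (k + 1)]
    exact Ideal.mul_mem_mul hx hr
  -- the bilinear map on representatives
  let B : ↥(I ^ (k + 1)) →ₗ[R] M →ₗ[R] M :=
    (LinearMap.lsmul R M).comp (Submodule.subtype _)
  have hB : ∀ x : ↥(I ^ (k + 1)), (I • (⊤ : Submodule R M)) ≤ LinearMap.ker (B x) := by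
    intro x
    refine Submodule.smul_le.2 fun r hr m _ => ?_
    simp only [LinearMap.mem_ker, B, LinearMap.comp_apply, LinearMap.lsmul_apply,
      Submodule.subtype_apply]
    rw [smul_smul]
    exact hkill _ (hmulmem _ x.2 r hr) m
  let C : ↥(I ^ (k + 1)) →ₗ[R] ((M ⧸ (I • (⊤ : Submodule R M))) →ₗ[R] M) :=
    { toFun := fun x => Submodule.liftQ _ (B x) (hB x)
      map_add' := by
        intro x y
        ext m
        simp [B, add_smul]
      map_smul' := by
        intro r x
        ext m
        simp [B, mul_smul] }
  have hCval : ∀ (x : ↥(I ^ (k + 1))) (m : M),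
      C x (Submodule.Quotient.mk m) = (x : R) • m := by
    intro x m
    simp [C, B]
  have hC : (I • (⊤ : Submodule R ↥(I ^ (k + 1)))) ≤ LinearMap.ker C := by
    refine Submodule.smul_le.2 fun r hr y _ => ?_
    simp only [LinearMap.mem_ker]
    ext m
    have h1 : Submodule.Quotient.mk (p := I • (⊤ : Submodule R M)) (r • m) = 0 := by
      rw [Submodule.Quotient.mk_eq_zero]
      exact Submodule.smul_mem_smul hr trivial
    have h2 : (C (r • y)) (Submodule.Quotient.mk m)
        = (C y) (Submodule.Quotient.mk (r • m)) := by
      rw [hCval, hCval]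
      rw [Submodule.coe_smul, smul_eq_mul, smul_smul, mul_comm]
    simp only [LinearMap.comp_apply, Submodule.mkQ_apply, LinearMap.zero_comp,
      LinearMap.zero_apply]
    rw [h2, h1, map_zero]
  let D := Submodule.liftQ _ C hC
  have hD : ∀ (x : ↥(I ^ (k + 1))) (m : M),
      D (Submodule.Quotient.mk x) (Submodule.Quotient.mk m) = (x : R) • m := by
    intro x m
    simp only [D, Submodule.liftQ_apply]
    exact hCval x m
  let D' : (↥(I ^ (k + 1)) ⧸ (I • (⊤ : Submodule R ↥(I ^ (k + 1))))) →+
      ((M ⧸ (I • (⊤ : Submodule R M))) →+ M) :=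
    { toFun := fun q1 => (D q1).toAddMonoidHom
      map_zero' := by ext m; simp
      map_add' := by intro a b; ext m; simp }
  have hsm1 : ∀ (r : R) (x : ↥(I ^ (k + 1))),
      (Ideal.Quotient.mk I r) • (Submodule.Quotient.mk (p := I • (⊤ : Submodule R ↥(I ^ (k + 1)))) x)
        = Submodule.Quotient.mk (r • x) := fun r x => Module.Quotient.mk_smul_mk (↥(I ^ (k + 1))) I r x
  have hsm2 : ∀ (r : R) (m : M),
      (Ideal.Quotient.mk I r) • (Submodule.Quotient.mk (p := I • (⊤ : Submodule R M)) m)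
        = Submodule.Quotient.mk (r • m) := fun r m => Module.Quotient.mk_smul_mk M I r m
  have hcompat : ∀ (c : R ⧸ I) (a : ↥(I ^ (k + 1)) ⧸ (I • (⊤ : Submodule R ↥(I ^ (k + 1)))))
      (b : M ⧸ (I • (⊤ : Submodule R M))), D' (c • a) b = D' a (c • b) := by
    intro c a b
    obtain ⟨r, rfl⟩ := Ideal.Quotient.mk_surjective c
    obtain ⟨x, rfl⟩ := Submodule.Quotient.mk_surjective _ a
    obtain ⟨m, rfl⟩ := Submodule.Quotient.mk_surjective _ b
    rw [hsm1, hsm2]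
    have hD'val : ∀ a b, D' a b = D a b := fun _ _ => rfl
    rw [hD'val, hD'val, hD, hD, Submodule.coe_smul, smul_eq_mul, mul_comm, smul_smul]
  let F := TensorProduct.liftAddHom D' hcompat
  have hF : ∀ (x : ↥(I ^ (k + 1))) (m : M),
      F ((Submodule.Quotient.mk x) ⊗ₜ[R ⧸ I] (Submodule.Quotient.mk m)) = (x : R) • m := by
    intro x m
    rw [TensorProduct.liftAddHom_tmul]
    exact hD x m
  let f : (TensorProduct (R ⧸ I)
      (↥(I ^ (k + 1)) ⧸ (I • (⊤ : Submodule R ↥(I ^ (k + 1)))))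
      (M ⧸ (I • (⊤ : Submodule R M)))) →ₗ[R] M :=
    { toFun := F
      map_add' := F.map_add
      map_smul' := by
        intro r t
        show F ((Ideal.Quotient.mk I r) • t) = r • F t
        induction t with
        | zero => rw [smul_zero, map_zero, smul_zero]
        | tmul a b =>
          obtain ⟨x, rfl⟩ := Submodule.Quotient.mk_surjective _ a
          obtain ⟨m, rfl⟩ := Submodule.Quotient.mk_surjective _ b
          rw [TensorProduct.smul_tmul', hsm1, hF, hF, Submodule.coe_smul, smul_eq_mul, mul_smul]
        | add s t hs ht => rw [smul_add, map_add, hs, ht, map_add, smul_add] }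
  have hf : ∀ (x : ↥(I ^ (k + 1))) (m : M),
      f ((Submodule.Quotient.mk x) ⊗ₜ[R ⧸ I] (Submodule.Quotient.mk m)) = (x : R) • m := hF
  have hinj : Function.Injective f := stmt16_aux_inj I k htor hflat F hF
  refine ⟨f, hf, hinj, ?_, Submodule.mkQ_surjective _⟩
  -- exactness
  rw [LinearMap.exact_iff, Submodule.ker_mkQ]
  apply le_antisymm
  · refine Submodule.smul_le.2 fun r hr m _ => ?_
    exact ⟨(Submodule.Quotient.mk ⟨r, hr⟩) ⊗ₜ (Submodule.Quotient.mk m), hf ⟨r, hr⟩ m⟩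
  · rintro y ⟨t, rfl⟩
    induction t with
    | zero => simpa using Submodule.zero_mem _
    | tmul a b =>
      obtain ⟨x, rfl⟩ := Submodule.Quotient.mk_surjective _ a
      obtain ⟨m, rfl⟩ := Submodule.Quotient.mk_surjective _ b
      rw [hf]
      exact Submodule.smul_mem_smul x.2 trivial
    | add s t hs ht => rw [map_add]; exact Submodule.add_mem _ hs ht
end
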